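/- arXiv:1305.0577 — 2 statements merged into one kernel-verified Lean document; each statement's English description precedes it below -/
import Mathlib

section
/- Let q = p^k with k odd, q ≡ 1 (mod 4), and let s be the maximal size of a set B ⊆ F_q with B - B ⊆ Q ∪ {0}. If ⌊√q⌋ is odd then s² + 2s - 2 ≤ q. -/
/-!
Let `B` be a largest set with square differences, `s = #B`, `χ` the quadratic character and
`S z = ∑ b ∈ B, χ (z - b)`. Orthogonality of `χ` and the Jacobi sum `J(χ, χ) = -χ(-1)` give
`∑ z, S z = 0` and `∑ z, S z ^ 2 = s (q - s)`; as `S = s - 1` on `B`, this yields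
`∑ z ∉ B, (s - 2 - S z) (S z + 1) = 2 (s² - q)`.

For `z ∉ B` we have `S z = s - 2 t`, where `t` counts the `b ∈ B` with `z - b` a nonsquare.
Since `-1` is a square, maximality of `B` gives `t ≥ 1`. Fixing `b₀ ∈ B`, the quotients
`(z - b) / (c - b₀)` with `z - b` nonsquare and `c ∈ B \ {b₀}` are `t (s - 1)` distinct
nonsquares, so `t (s - 1) ≤ (q - 1) / 2`; if `s` is odd and `q < s² + 2s - 2` this forces
`2t ≤ s + 1`. Then every summand above is nonnegative and `q ≤ s²`. But `s² ≤ q` (for a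
nonsquare `v`, `(x, y) ↦ x + v y` is injective on `B × B`), and `q = p ^ k` with `k` odd is not a
square.
-/

open Finset

theorem IsSquare.of_mul_right {K : Type*} [Field K] {x y : K} (hxy : IsSquare (x * y))
    (hy : IsSquare y) (hy0 : y ≠ 0) : IsSquare x := by
  simpa [hy0] using hxy.div hy

section QuadraticCharSums

variable {F : Type*} [Field F] [Fintype F] [DecidableEq F]

theorem quadraticChar_eq_one_sub_two_mul {a : F} (ha : a ≠ 0) :
    quadraticChar F a = 1 - 2 * if IsSquare a then 0 else 1 := by
  split_ifs with h
  · simpa using (quadraticChar_one_iff_isSquare ha).2 h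
  · rw [quadraticChar_neg_one_iff_not_isSquare.2 h]; norm_num

theorem sum_quadraticChar_eq_card_sub {ι : Type*} (A : Finset ι) {f : ι → F}
    (hf : ∀ i ∈ A, f i ≠ 0) :
    ∑ i ∈ A, quadraticChar F (f i) = #A - 2 * #{i ∈ A | ¬IsSquare (f i)} := by
  rw [sum_congr rfl fun i hi => quadraticChar_eq_one_sub_two_mul (hf i hi), sum_sub_distrib,
    ← mul_sum, natCast_card_filter]
  simp [ite_not]

theorem sum_quadraticChar_sub_eq_card_sub {B : Finset F} {z : F} (hz : z ∉ B) :
    ∑ b ∈ B, quadraticChar F (z - b) = #B - 2 * #{b ∈ B | ¬IsSquare (z - b)} :=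
  sum_quadraticChar_eq_card_sub B fun _ hb => sub_ne_zero.2 fun h => hz (h ▸ hb)

theorem two_mul_card_nonsquares_add_one (hF : ringChar F ≠ 2) :
    2 * #{a : F | ¬IsSquare a} + 1 = Fintype.card F := by
  have hsum : ∑ a ∈ {0}ᶜ, quadraticChar F a = 0 := by
    rw [← quadraticChar_sum_zero hF, ← sum_compl_add_sum {0}, sum_singleton, quadraticChar_zero,
      add_zero]
  have hfilter : ({a ∈ {0}ᶜ | ¬IsSquare a} : Finset F) = ({a | ¬IsSquare a} : Finset F) := by
    ext a
    simp only [mem_filter, mem_compl, mem_singleton, mem_univ, true_and, and_iff_right_iff_imp]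
    rintro h rfl
    exact h IsSquare.zero
  have h := sum_quadraticChar_eq_card_sub ({0}ᶜ : Finset F) (f := fun a => a) fun a ha => by
    simpa using ha
  rw [hsum, hfilter, card_compl, card_singleton] at h
  have := Fintype.card_pos (α := F)
  omega

theorem sum_quadraticChar_sub (hF : ringChar F ≠ 2) (b : F) :
    ∑ z, quadraticChar F (z - b) = 0 := by
  rw [← quadraticChar_sum_zero hF]
  exact Fintype.sum_equiv (Equiv.subRight b) _ _ fun _ => rfl

theorem sum_quadraticChar_sub_mul_sub (hF : ringChar F ≠ 2) (b c : F) :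
    ∑ z, quadraticChar F (z - b) * quadraticChar F (z - c) =
      (if b = c then (Fintype.card F : ℤ) else 0) - 1 := by
  split_ifs with h
  · subst h
    refine (Fintype.sum_equiv (Equiv.subRight b) _ (fun z => quadraticChar F z ^ 2)
      fun _ => (sq _).symm).trans ?_
    rw [Fintype.sum_eq_add_sum_compl 0, quadraticChar_zero, sq, zero_mul, zero_add,
      sum_congr rfl fun a ha => quadraticChar_sq_one (by simpa using ha), sum_const, card_compl,
      card_singleton, nsmul_one, Nat.cast_sub Fintype.card_pos, Nat.cast_one]
  · have he : c - b ≠ 0 := sub_ne_zero.2 (Ne.symm h)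
    have hJ : jacobiSum (quadraticChar F) (quadraticChar F) = -quadraticChar F (-1) := by
      simpa [(quadraticChar_isQuadratic F).inv] using
        jacobiSum_nontrivial_inv (quadraticChar_ne_one hF)
    have hbij : Function.Bijective fun x : F => b + (c - b) * x :=
      (Finite.injective_iff_bijective).1 ((add_right_injective b).comp (mul_right_injective₀ he))
    calc ∑ z, quadraticChar F (z - b) * quadraticChar F (z - c)
        = ∑ x, quadraticChar F (-1) * (quadraticChar F x * quadraticChar F (1 - x)) := by
          refine (Fintype.sum_bijective _ hbij _ _ fun x => ?_).symm
          simp only [← map_mul]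
          rw [show (b + (c - b) * x - b) * (b + (c - b) * x - c) =
            (c - b) ^ 2 * (-1 * (x * (1 - x))) by ring, map_mul _ ((c - b) ^ 2),
            quadraticChar_sq_one' he, one_mul, map_mul _ (-1)]
      _ = -1 := by
        rw [← mul_sum, ← jacobiSum, hJ, mul_neg, ← map_mul, neg_one_mul, neg_neg, map_one]

theorem sum_sq_sum_quadraticChar_sub (hF : ringChar F ≠ 2) (B : Finset F) :
    ∑ z, (∑ b ∈ B, quadraticChar F (z - b)) ^ 2 = #B * (Fintype.card F - #B) := by
  simp_rw [sq, sum_mul_sum]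
  rw [sum_comm]
  simp_rw [sum_comm (s := univ), sum_quadraticChar_sub_mul_sub hF, sum_sub_distrib, sum_ite_eq]
  rw [sum_congr rfl fun b hb => by rw [if_pos hb]]
  simp [mul_sub]

end QuadraticCharSums

def IsPaleyClique {F : Type*} [Field F] (B : Finset F) : Prop :=
  ∀ b₁ ∈ B, ∀ b₂ ∈ B, b₁ ≠ b₂ → IsSquare (b₁ - b₂)

namespace IsPaleyClique

variable {F : Type*} [Field F] {B : Finset F}

theorem card_mul_self_le [Fintype F] (hF : ringChar F ≠ 2) (hB : IsPaleyClique B) :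
    #B * #B ≤ Fintype.card F := by
  obtain ⟨v, hv⟩ := FiniteField.exists_nonsquare hF
  rw [← card_product, ← card_univ]
  refine card_le_card_of_injOn (fun x => x.1 + v * x.2) (fun _ _ => mem_coe.2 (mem_univ _)) ?_
  rintro ⟨x₁, y₁⟩ h₁ ⟨x₂, y₂⟩ h₂ heq
  simp only [coe_product, Set.mem_prod, mem_coe] at h₁ h₂ heq
  have hcross : x₁ - x₂ = v * (y₂ - y₁) := by linear_combination heq
  by_cases hy : y₂ = y₁
  · rw [hy, sub_self, mul_zero, sub_eq_zero] at hcross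
    rw [hcross, hy]
  · have hy0 : y₂ - y₁ ≠ 0 := sub_ne_zero.2 hy
    have hx : x₁ ≠ x₂ := fun hx => by
      rw [hx, sub_self, eq_comm, mul_eq_zero] at hcross
      exact hcross.elim (fun hv0 => hv (hv0 ▸ IsSquare.zero)) hy0
    exact absurd (IsSquare.of_mul_right (hcross ▸ hB _ h₁.1 _ h₂.1 hx) (hB _ h₂.2 _ h₁.2 hy) hy0)
      hv

variable [DecidableEq F]

theorem insert (hneg : IsSquare (-1 : F)) (hB : IsPaleyClique B) {z : F}
    (hz : ∀ b ∈ B, IsSquare (z - b)) : IsPaleyClique (insert z B) := by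
  intro x hx y hy hxy
  rcases mem_insert.1 hx with rfl | hxB <;> rcases mem_insert.1 hy with rfl | hyB
  · exact absurd rfl hxy
  · exact hz y hyB
  · simpa using hneg.mul (hz x hxB)
  · exact hB x hxB y hyB hxy

variable [Fintype F]

theorem sum_quadraticChar_sub_of_mem (hB : IsPaleyClique B) {z : F} (hz : z ∈ B) :
    ∑ b ∈ B, quadraticChar F (z - b) = #B - 1 := by
  rw [← add_sum_erase B _ hz, sub_self, quadraticChar_zero, zero_add,
    sum_congr rfl fun b hb => ?_, sum_const, card_erase_of_mem hz, nsmul_one,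
    Nat.cast_sub (card_pos.2 ⟨z, hz⟩), Nat.cast_one]
  obtain ⟨hbz, hb⟩ := mem_erase.1 hb
  exact (quadraticChar_one_iff_isSquare (sub_ne_zero.2 hbz.symm)).2 (hB z hz b hb hbz.symm)

theorem card_filter_not_isSquare_sub_mul_le (hB : IsPaleyClique B) {b₀ : F} (hb₀ : b₀ ∈ B)
    (z : F) : #{b ∈ B | ¬IsSquare (z - b)} * (#B - 1) ≤ #{a : F | ¬IsSquare a} := by
  rw [← card_erase_of_mem hb₀, ← card_product]
  refine card_le_card_of_injOn (fun x => (z - x.1) / (x.2 - b₀)) ?_ ?_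
  · rintro ⟨b, c⟩ hbc
    simp only [coe_product, Set.mem_prod, mem_coe, mem_filter, mem_erase, mem_univ,
      true_and] at hbc ⊢
    obtain ⟨⟨-, hns⟩, hcb₀, hc⟩ := hbc
    exact fun h => hns (by simpa [sub_ne_zero.2 hcb₀] using h.mul (hB c hc b₀ hb₀ hcb₀))
  · rintro ⟨b₁, c₁⟩ h₁ ⟨b₂, c₂⟩ h₂ heq
    simp only [coe_product, Set.mem_prod, mem_coe, mem_filter, mem_erase] at h₁ h₂ heq
    obtain ⟨⟨hb₁, hns₁⟩, hc₁b₀, hc₁⟩ := h₁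
    obtain ⟨⟨hb₂, -⟩, hc₂b₀, hc₂⟩ := h₂
    have hz₁ : z - b₁ ≠ 0 := fun h => hns₁ (h ▸ IsSquare.zero)
    have hcross : (z - b₁) * (c₂ - c₁) = (b₁ - b₂) * (c₁ - b₀) := by
      rw [div_eq_div_iff (sub_ne_zero.2 hc₁b₀) (sub_ne_zero.2 hc₂b₀)] at heq
      linear_combination heq
    by_cases hb : b₁ = b₂
    · rw [hb, sub_self, zero_mul, mul_eq_zero] at hcross
      rw [hb, sub_eq_zero.1 (hcross.resolve_left (hb ▸ hz₁))]
    · have hc : c₂ ≠ c₁ := by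
        rintro rfl
        rw [sub_self, mul_zero, eq_comm] at hcross
        exact mul_ne_zero (sub_ne_zero.2 hb) (sub_ne_zero.2 hc₁b₀) hcross
      exact absurd (IsSquare.of_mul_right
        (hcross ▸ (hB b₁ hb₁ b₂ hb₂ hb).mul (hB c₁ hc₁ b₀ hb₀ hc₁b₀))
        (hB c₂ hc₂ c₁ hc₁ hc) (sub_ne_zero.2 hc)) hns₁

theorem sum_compl_mul_eq_two_mul_sq_sub_card (hF : ringChar F ≠ 2) (hB : IsPaleyClique B) :
    ∑ z ∈ Bᶜ, ((#B : ℤ) - 2 - ∑ b ∈ B, quadraticChar F (z - b)) *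
      (∑ b ∈ B, quadraticChar F (z - b) + 1) = 2 * ((#B : ℤ) ^ 2 - Fintype.card F) := by
  set S : F → ℤ := fun z => ∑ b ∈ B, quadraticChar F (z - b)
  have hmem : ∀ z ∈ B, S z = #B - 1 := fun z hz => hB.sum_quadraticChar_sub_of_mem hz
  have hS : ∑ z, S z = 0 := by
    rw [sum_comm]
    exact sum_eq_zero fun b _ => sum_quadraticChar_sub hF b
  have hS2 : ∑ z, S z ^ 2 = #B * (Fintype.card F - #B) := sum_sq_sum_quadraticChar_sub hF B
  rw [← sum_compl_add_sum B, sum_congr rfl hmem, sum_const, nsmul_eq_mul] at hS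
  rw [← sum_compl_add_sum B, sum_congr rfl fun z (hz : z ∈ B) => by rw [hmem z hz], sum_const,
    nsmul_eq_mul] at hS2
  calc ∑ z ∈ Bᶜ, ((#B : ℤ) - 2 - S z) * (S z + 1)
      = ∑ z ∈ Bᶜ, ((#B - 3) * S z - S z ^ 2 + (#B - 2)) := sum_congr rfl fun _ _ => by ring
    _ = (#B - 3) * ∑ z ∈ Bᶜ, S z - ∑ z ∈ Bᶜ, S z ^ 2 + #Bᶜ * (#B - 2) := by
      rw [sum_add_distrib, sum_sub_distrib, ← mul_sum, sum_const, nsmul_eq_mul]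
    _ = 2 * ((#B : ℤ) ^ 2 - Fintype.card F) := by
      rw [card_compl, Nat.cast_sub (card_le_univ B)]
      linear_combination (#B - 3 : ℤ) * hS - hS2

end IsPaleyClique

theorem two_mul_le_succ_of_mul_pred_le {s t n : ℕ} (hs : Odd s) (hts : t ≤ s)
    (htn : t * (s - 1) ≤ n) (hn : 2 * n + 4 ≤ s ^ 2 + 2 * s) : 2 * t ≤ s + 1 := by
  obtain ⟨a, rfl⟩ := hs
  rw [add_tsub_cancel_right] at htn
  by_contra! h
  rcases Nat.eq_zero_or_pos a with rfl | ha
  · omega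
  · nlinarith [Nat.mul_le_mul_left (2 * a) (show a + 2 ≤ t by omega)]

theorem IsPaleyClique.card_le_sq_of_maximal {F : Type*} [Field F] [Fintype F] [DecidableEq F]
    {B : Finset F} (hF : ringChar F ≠ 2) (hB : IsPaleyClique B)
    (hmax : ∀ z ∉ B, ∃ b ∈ B, ¬IsSquare (z - b)) (hodd : Odd #B)
    (hlt : Fintype.card F + 3 ≤ #B ^ 2 + 2 * #B) : Fintype.card F ≤ #B ^ 2 := by
  obtain ⟨b₀, hb₀⟩ : B.Nonempty := card_pos.1 hodd.pos
  have hterm : ∀ z ∈ Bᶜ, 0 ≤ ((#B : ℤ) - 2 - ∑ b ∈ B, quadraticChar F (z - b)) *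
      (∑ b ∈ B, quadraticChar F (z - b) + 1) := by
    intro z hz
    rw [mem_compl] at hz
    have ht1 : 1 ≤ #{b ∈ B | ¬IsSquare (z - b)} := by
      obtain ⟨b, hb, hns⟩ := hmax z hz
      exact card_pos.2 ⟨b, mem_filter.2 ⟨hb, hns⟩⟩
    have ht2 : 2 * #{b ∈ B | ¬IsSquare (z - b)} ≤ #B + 1 :=
      two_mul_le_succ_of_mul_pred_le hodd (card_filter_le _ _)
        (hB.card_filter_not_isSquare_sub_mul_le hb₀ z)
        (by linarith [two_mul_card_nonsquares_add_one hF])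
    rw [sum_quadraticChar_sub_eq_card_sub hz]
    have ht1' : (1 : ℤ) ≤ #{b ∈ B | ¬IsSquare (z - b)} := by exact_mod_cast ht1
    have ht2' : (2 * #{b ∈ B | ¬IsSquare (z - b)} : ℤ) ≤ #B + 1 := by exact_mod_cast ht2
    nlinarith
  have h := sum_nonneg hterm
  rw [hB.sum_compl_mul_eq_two_mul_sq_sub_card hF] at h
  have : (Fintype.card F : ℤ) ≤ #B ^ 2 := by linarith
  exact_mod_cast this

theorem Nat.Prime.pow_ne_mul_self {p k : ℕ} (hp : p.Prime) (hk : Odd k) (n : ℕ) :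
    p ^ k ≠ n * n := by
  intro h
  obtain ⟨i, -, rfl⟩ := (Nat.dvd_prime_pow hp).1 (Dvd.intro n h.symm)
  rw [← pow_add] at h
  exact Nat.not_even_iff_odd.2 hk ⟨i, Nat.pow_right_injective hp.two_le h⟩

theorem stmt_11 {F : Type*} [Field F] [Fintype F] (p k s : ℕ)
    (hp : p.Prime) (hk : Odd k) (hcard : Fintype.card F = p ^ k)
    (hq : Fintype.card F % 4 = 1)
    (hs : IsGreatest {n : ℕ | ∃ B : Finset F,
      (∀ b₁ ∈ B, ∀ b₂ ∈ B, b₁ ≠ b₂ → b₁ - b₂ ≠ 0 ∧ IsSquare (b₁ - b₂)) ∧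
      B.card = n} s)
    (hodd2 : Odd (Nat.sqrt (Fintype.card F))) :
    (s : ℤ) ^ 2 + 2 * s - 2 ≤ (Fintype.card F : ℤ) := by
  classical
  obtain ⟨⟨B, hB, rfl⟩, hmax⟩ := hs
  have hF : ringChar F ≠ 2 := fun h => by
    have := FiniteField.even_card_iff_char_two.1 h
    omega
  replace hB : IsPaleyClique B := fun x hx y hy hxy => (hB x hx y hy hxy).2
  rcases (Nat.le_sqrt.2 (hB.card_mul_self_le hF)).lt_or_eq with hlt | heq
  · have : ((#B + 1) * (#B + 1) : ℤ) ≤ Fintype.card F := by exact_mod_cast Nat.le_sqrt.1 hlt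
    nlinarith
  · by_contra! hlt
    have hmaximal : ∀ z ∉ B, ∃ b ∈ B, ¬IsSquare (z - b) := fun z hz => by
      by_contra! hsq
      have hneg : IsSquare (-1 : F) := FiniteField.isSquare_neg_one_iff.2 (by omega)
      have := hmax ⟨insert z B, fun x hx y hy hxy =>
        ⟨sub_ne_zero.2 hxy, hB.insert hneg hsq x hx y hy hxy⟩, rfl⟩
      rw [card_insert_of_notMem hz] at this
      omega
    have hle := hB.card_le_sq_of_maximal hF hmaximal (heq ▸ hodd2) (by zify; linarith)
    have hge := Nat.sqrt_le' (Fintype.card F)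
    rw [← heq] at hge
    exact hp.pow_ne_mul_self hk #B (by rw [← hcard, ← sq]; exact le_antisymm hle hge)
end

section
/- Let B ⊆ F_q be maximal with B - B ⊆ Q ∪ {0}, s = |B|, s even and s = ⌊√q⌋, where q ≡ 1 (mod 4) with q not a perfect square. Then there exists t ∉ B with φ(t) ≤ -2, where φ(t) = Σ_{b∈B} χ(b - t). -/
/-!
Write `φ(t) = ∑_{b ∈ B} χ(b - t)`. Summing over all `t ∈ F_q` gives `0`, because every shifted
character sum vanishes; on `B` itself `φ ≡ s - 1 > 0`. Hence `φ(t) < 0` for some `t ∉ B`, and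
there `φ(t)` is a sum of `s` terms `±1`, so it has the parity of `s` and is at most `-2`.
-/

open scoped Classical

/-- The quadratic character: 0 at 0, 1 on nonzero squares, -1 on non-squares. -/
noncomputable def quadChar {F : Type*} [Field F] (x : F) : ℤ :=
  if x = 0 then 0 else if IsSquare x then 1 else -1

open Finset

section QuadChar

variable {F : Type*} [Field F]

lemma quadChar_zero : quadChar (0 : F) = 0 := if_pos rfl

lemma quadChar_of_isSquare {x : F} (hx : x ≠ 0) (hsq : IsSquare x) : quadChar x = 1 := by
  simp [quadChar, hx, hsq]

lemma even_quadChar_add_one {x : F} (hx : x ≠ 0) : Even (quadChar x + 1) := by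
  by_cases hsq : IsSquare x <;> simp [quadChar, hx, hsq]

lemma quadChar_eq_quadraticChar [Fintype F] [DecidableEq F] (x : F) :
    quadChar x = quadraticChar F x := by
  rw [quadraticChar_apply, quadraticCharFun]
  unfold quadChar
  split_ifs <;> rfl

variable [Fintype F]

lemma sum_quadChar_sub_left (hF : ringChar F ≠ 2) (b : F) : ∑ t : F, quadChar (b - t) = 0 := by
  refine (Fintype.sum_equiv (Equiv.subLeft b) _ quadChar fun _ => rfl).trans ?_
  simp_rw [quadChar_eq_quadraticChar]
  exact quadraticChar_sum_zero hF

end QuadChar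

section QuadCharSum

variable {F : Type*} [Field F]

noncomputable def quadCharSum (B : Finset F) (t : F) : ℤ := ∑ b ∈ B, quadChar (b - t)

lemma sum_quadCharSum [Fintype F] (hF : ringChar F ≠ 2) (B : Finset F) :
    ∑ t : F, quadCharSum B t = 0 := by
  unfold quadCharSum
  rw [Finset.sum_comm]
  simp [sum_quadChar_sub_left hF]

lemma quadCharSum_of_mem {B : Finset F}
    (hB : ∀ b₁ ∈ B, ∀ b₂ ∈ B, b₁ ≠ b₂ → IsSquare (b₁ - b₂)) {t : F} (ht : t ∈ B) :
    quadCharSum B t = #B - 1 := by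
  have hone : ∀ b ∈ B.erase t, quadChar (b - t) = 1 := fun b hb =>
    quadChar_of_isSquare (sub_ne_zero.mpr (ne_of_mem_erase hb)) (hB b (mem_of_mem_erase hb) t ht
      (ne_of_mem_erase hb))
  rw [quadCharSum, ← add_sum_erase B _ ht, sub_self, quadChar_zero, zero_add, sum_congr rfl hone,
    sum_const, card_erase_of_mem ht, nsmul_one, Nat.cast_pred (card_pos.mpr ⟨t, ht⟩)]

lemma even_quadCharSum_add_card {B : Finset F} {t : F} (ht : t ∉ B) :
    Even (quadCharSum B t + #B) := by
  have hsum : quadCharSum B t + #B = ∑ b ∈ B, (quadChar (b - t) + 1) := by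
    rw [sum_add_distrib, sum_const, nsmul_one, quadCharSum]
  rw [hsum]
  exact even_sum _ fun b hb => even_quadChar_add_one (sub_ne_zero.mpr (ne_of_mem_of_not_mem hb ht))

lemma exists_notMem_quadCharSum_neg [Fintype F] (hF : ringChar F ≠ 2) {B : Finset F}
    (hB : ∀ b₁ ∈ B, ∀ b₂ ∈ B, b₁ ≠ b₂ → IsSquare (b₁ - b₂)) (hcard : 2 ≤ #B) :
    ∃ t ∉ B, quadCharSum B t < 0 := by
  have hB_sum : ∑ t ∈ B, quadCharSum B t = #B * (#B - 1) := by
    rw [sum_congr rfl fun t ht => quadCharSum_of_mem hB ht, sum_const, nsmul_eq_mul]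
  have hcompl : ∑ t ∈ Bᶜ, quadCharSum B t < ∑ t ∈ Bᶜ, 0 := by
    have hsplit := sum_compl_add_sum B (quadCharSum B)
    have hcard' : (2 : ℤ) ≤ #B := by exact_mod_cast hcard
    rw [sum_quadCharSum hF, hB_sum] at hsplit
    rw [sum_const_zero]
    nlinarith
  obtain ⟨t, htc, hneg⟩ := exists_lt_of_sum_lt hcompl
  exact ⟨t, mem_compl.mp htc, hneg⟩

end QuadCharSum

theorem stmt_12_general {F : Type*} [Field F] [Fintype F]
    (hq : Fintype.card F % 4 = 1)
    (B : Finset F)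
    (hB : ∀ b₁ ∈ B, ∀ b₂ ∈ B, b₁ ≠ b₂ → b₁ - b₂ ≠ 0 ∧ IsSquare (b₁ - b₂))
    (hcard : B.card = Nat.sqrt (Fintype.card F)) (hpar : Even B.card) :
    ∃ t : F, t ∉ B ∧ ∑ b ∈ B, quadChar (b - t) ≤ -2 := by
  have hF : ringChar F ≠ 2 := fun h => by
    have := FiniteField.even_card_of_char_two h
    omega
  have hB_pos : B.card ≠ 0 := by
    rw [hcard, Ne, Nat.sqrt_eq_zero]
    omega
  have hB_two : 2 ≤ B.card := by
    obtain ⟨k, hk⟩ := hpar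
    omega
  obtain ⟨t, ht, hneg⟩ :=
    exists_notMem_quadCharSum_neg hF (fun b₁ h₁ b₂ h₂ hne => (hB b₁ h₁ b₂ h₂ hne).2) hB_two
  obtain ⟨k, hk⟩ := (even_quadCharSum_add_card ht).add (hpar.natCast (α := ℤ))
  refine ⟨t, ht, ?_⟩
  change quadCharSum B t ≤ -2
  omega

theorem stmt_12 {F : Type*} [Field F] [Fintype F]
    (hq : Fintype.card F % 4 = 1)
    (hns : ¬ ∃ n : ℕ, n ^ 2 = Fintype.card F)
    (B : Finset F)
    (hB : ∀ b₁ ∈ B, ∀ b₂ ∈ B, b₁ ≠ b₂ → b₁ - b₂ ≠ 0 ∧ IsSquare (b₁ - b₂))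
    (hmax : ∀ C : Finset F,
      (∀ c₁ ∈ C, ∀ c₂ ∈ C, c₁ ≠ c₂ → c₁ - c₂ ≠ 0 ∧ IsSquare (c₁ - c₂)) →
      B ⊆ C → C = B)
    (hcard : B.card = Nat.sqrt (Fintype.card F)) (hpar : Even B.card) :
    ∃ t : F, t ∉ B ∧ ∑ b ∈ B, quadChar (b - t) ≤ -2 :=
  stmt_12_general hq B hB hcard hpar
end
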